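/- For all φ₀, φ₁ with 0 < φ₀ < φ₁ < π/2, the map T̃_{C_ℓ}(ã) := √2 ∫₀^{π/2} dθ/√(1 − ã sin²θ) + (1/√2) ∫_{φ₀}^{φ₁} dx/√(ã − sin²x) is strictly convex on (sin²φ₁, 1), with second derivative (3/(2√2)) ∫₀^{π/2} sin⁴θ/(1 − ã sin²θ)^{5/2} dθ + (3/(4√2)) ∫_{φ₀}^{φ₁} dx/(ã − sin²x)^{5/2} > 0. -/

import Mathlib

/-!
For `m ∈ (sin²φ₁, 1)` both integrands of the time map have the form `w t / (c t + m d t)^q` with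
a base bounded away from `0` uniformly near `m`, so the integrals may be differentiated twice
under the integral sign. Each differentiation raises `q` by one and multiplies the integrand by
`q sin²θ` (first integral) or `-q` (second integral). The resulting second derivative is a
positive combination of integrals of positive functions, and strict convexity follows.
-/

open Real

/-- The map `T̃_{C_ℓ}(ã) = √2 ∫₀^{π/2} dθ/√(1 − ã sin²θ)
 + (1/√2) ∫_{φ₀}^{φ₁} dx/√(ã − sin²x)`. -/
noncomputable def timeMapTClTilde (φ₀ φ₁ a : ℝ) : ℝ :=
  Real.sqrt 2 * (∫ θ in (0:ℝ)..(π / 2), 1 / Real.sqrt (1 - a * Real.sin θ ^ 2)) +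
    (1 / Real.sqrt 2) * ∫ x in φ₀..φ₁, 1 / Real.sqrt (a - Real.sin x ^ 2)

open MeasureTheory Set Filter Topology

theorem ContinuousOn.div_rpow {w g : ℝ → ℝ} {S : Set ℝ} (hw : ContinuousOn w S)
    (hg : ContinuousOn g S) (hpos : ∀ t ∈ S, 0 < g t) (q : ℝ) :
    ContinuousOn (fun t => w t / g t ^ q) S :=
  hw.div (hg.rpow_const fun t ht => Or.inl (hpos t ht).ne') fun t ht =>
    (rpow_pos_of_pos (hpos t ht) q).ne'

theorem hasDerivAt_div_rpow_affine (w c d : ℝ) {q x : ℝ} (hx : 0 < c + x * d) :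
    HasDerivAt (fun x => w / (c + x * d) ^ q) (-q * (w * d / (c + x * d) ^ (q + 1))) x := by
  have hbase : HasDerivAt (fun x => c + x * d) d x := by
    simpa using ((hasDerivAt_id x).mul_const d).const_add c
  have hrpow := (hbase.rpow_const (p := -q) (Or.inl hx.ne')).const_mul w
  refine (hrpow.congr_of_eventuallyEq ?_).congr_deriv ?_
  · filter_upwards [hbase.continuousAt.eventually (lt_mem_nhds hx)] with y hy
    rw [rpow_neg hy.le, div_eq_mul_inv]
  · rw [show -q - 1 = -(q + 1) by ring, rpow_neg hx.le]
    ring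

theorem hasDerivAt_integral_div_rpow_affine {w c d : ℝ → ℝ} {a b q ε x₀ : ℝ} {s : Set ℝ}
    (hw : ContinuousOn w (uIcc a b)) (hc : ContinuousOn c (uIcc a b))
    (hd : ContinuousOn d (uIcc a b)) (hq : -1 ≤ q) (hε : 0 < ε) (hs : s ∈ 𝓝 x₀)
    (hbase : ∀ x ∈ s, ∀ t ∈ uIcc a b, ε ≤ c t + x * d t) :
    HasDerivAt (fun x => ∫ t in a..b, w t / (c t + x * d t) ^ q)
      (-q * ∫ t in a..b, w t * d t / (c t + x₀ * d t) ^ (q + 1)) x₀ := by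
  have hcont : ∀ x ∈ s, ∀ (v : ℝ → ℝ) (r : ℝ), ContinuousOn v (uIcc a b) →
      ContinuousOn (fun t => v t / (c t + x * d t) ^ r) (uIcc a b) := fun x hx v r hv =>
    hv.div_rpow (hc.add (continuousOn_const.mul hd)) (fun t ht => hε.trans_le (hbase x hx t ht))
      r
  have hx₀ := mem_of_mem_nhds hs
  obtain ⟨M, hM⟩ := isCompact_uIcc.exists_bound_of_continuousOn (hw.mul hd)
  have hbound : ∀ t ∈ uIoc a b, ∀ x ∈ s,
      ‖-q * (w t * d t / (c t + x * d t) ^ (q + 1))‖ ≤ |q| * (M / ε ^ (q + 1)) := by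
    intro t ht x hx
    have hεt := hbase x hx t (uIoc_subset_uIcc ht)
    have hpow : ε ^ (q + 1) ≤ (c t + x * d t) ^ (q + 1) := rpow_le_rpow hε.le hεt (by linarith)
    have hMt := hM t (uIoc_subset_uIcc ht)
    rw [norm_mul, norm_div, norm_neg, norm_of_nonneg (rpow_nonneg (hε.le.trans hεt) _)]
    exact mul_le_mul_of_nonneg_left
      (div_le_div₀ ((norm_nonneg _).trans hMt) hMt (rpow_pos_of_pos hε _) hpow) (norm_nonneg _)
  have hderiv := intervalIntegral.hasDerivAt_integral_of_dominated_loc_of_deriv_le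
    (μ := volume) hs
    (eventually_of_mem hs fun x hx =>
      ((hcont x hx w q hw).mono uIoc_subset_uIcc).aestronglyMeasurable measurableSet_uIoc)
    (hcont x₀ hx₀ w q hw).intervalIntegrable
    ((((hcont x₀ hx₀ _ (q + 1) (hw.mul hd)).mono uIoc_subset_uIcc).aestronglyMeasurable
      measurableSet_uIoc).const_mul (-q))
    (ae_of_all _ hbound) intervalIntegrable_const
    (ae_of_all _ fun t ht x hx => hasDerivAt_div_rpow_affine (w t) (c t) (d t)
      (hε.trans_le (hbase x hx t (uIoc_subset_uIcc ht))))
  simpa only [intervalIntegral.integral_const_mul] using hderiv.2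

/-- `∫₀^{π/2} sinⁿθ / (1 - m sin²θ)^q dθ`; for `n = 0`, `q = 1/2` this is the complete elliptic
integral `K(m)`. -/
noncomputable def ellipticMoment (n : ℕ) (q m : ℝ) : ℝ :=
  ∫ θ in (0:ℝ)..(π / 2), sin θ ^ n / (1 - m * sin θ ^ 2) ^ q

noncomputable def arcIntegral (a b q m : ℝ) : ℝ :=
  ∫ t in a..b, 1 / (m - sin t ^ 2) ^ q

theorem min_one_one_sub_le_one_sub_mul_sin_sq (x θ : ℝ) :
    min 1 (1 - x) ≤ 1 - x * sin θ ^ 2 := by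
  have h0 := sq_nonneg (sin θ)
  have h1 := sin_sq_le_one θ
  rcases le_total 0 x with hx | hx
  · exact (min_le_right _ _).trans (by nlinarith)
  · exact (min_le_left _ _).trans (by nlinarith)

theorem one_sub_mul_sin_sq_pos {m : ℝ} (hm : m < 1) (θ : ℝ) : 0 < 1 - m * sin θ ^ 2 :=
  (lt_min one_pos (sub_pos.2 hm)).trans_le (min_one_one_sub_le_one_sub_mul_sin_sq m θ)

theorem hasDerivAt_ellipticMoment (n : ℕ) {q m : ℝ} (hq : -1 ≤ q) (hm : m < 1) :
    HasDerivAt (ellipticMoment n q) (q * ellipticMoment (n + 2) (q + 1) m) m := by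
  have hbase : ∀ x ∈ Iio ((1 + m) / 2), ∀ θ ∈ uIcc 0 (π / 2),
      min 1 ((1 - m) / 2) ≤ 1 + x * -sin θ ^ 2 := fun x hx θ _ => by
    have := min_one_one_sub_le_one_sub_mul_sin_sq x θ
    have : min 1 ((1 - m) / 2) ≤ min 1 (1 - x) := min_le_min_left _ (by linarith [mem_Iio.1 hx])
    linarith
  have h := hasDerivAt_integral_div_rpow_affine (w := fun θ => sin θ ^ n) (c := fun _ => 1)
    (d := fun θ => -sin θ ^ 2) (continuous_sin.pow n).continuousOn continuousOn_const
    (continuous_sin.pow 2).neg.continuousOn hq (lt_min one_pos (by linarith))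
    (Iio_mem_nhds (by linarith : m < (1 + m) / 2)) hbase
  simp only [mul_neg, ← sub_eq_add_neg, neg_div, intervalIntegral.integral_neg, neg_mul, neg_neg,
    ← pow_add] at h
  exact h

theorem hasDerivAt_arcIntegral {a b q m : ℝ} (hq : -1 ≤ q)
    (hm : ∀ t ∈ uIcc a b, sin t ^ 2 < m) :
    HasDerivAt (arcIntegral a b q) (-q * arcIntegral a b (q + 1) m) m := by
  obtain ⟨t₀, ht₀, hmax⟩ := (isCompact_uIcc (a := a) (b := b)).exists_isMaxOn nonempty_uIcc
    (f := fun t => sin t ^ 2) (continuous_sin.pow 2).continuousOn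
  have hε : 0 < (m - sin t₀ ^ 2) / 2 := by linarith [hm t₀ ht₀]
  have h := hasDerivAt_integral_div_rpow_affine (w := fun _ => 1) (c := fun t => -sin t ^ 2)
    (d := fun _ => 1) continuousOn_const (continuous_sin.pow 2).neg.continuousOn
    continuousOn_const hq hε (Ioi_mem_nhds (by linarith : m - (m - sin t₀ ^ 2) / 2 < m))
    fun x hx t ht => by linarith [mem_Ioi.1 hx, isMaxOn_iff.1 hmax t ht]
  simp only [mul_one, neg_add_eq_sub] at h
  exact h

theorem ellipticMoment_pos (n : ℕ) (q : ℝ) {m : ℝ} (hm : m < 1) : 0 < ellipticMoment n q m :=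
  intervalIntegral.intervalIntegral_pos_of_pos_on
    (((continuous_sin.pow n).continuousOn.div_rpow (by fun_prop)
      (fun θ _ => one_sub_mul_sin_sq_pos hm θ) q).intervalIntegrable)
    (fun θ hθ => div_pos (pow_pos (sin_pos_of_pos_of_lt_pi hθ.1 (by linarith [hθ.2, pi_pos])) n)
      (rpow_pos_of_pos (one_sub_mul_sin_sq_pos hm θ) q))
    (by linarith [pi_pos])

theorem arcIntegral_pos {a b : ℝ} (q : ℝ) {m : ℝ} (hab : a < b)
    (hm : ∀ t ∈ uIcc a b, sin t ^ 2 < m) : 0 < arcIntegral a b q m :=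
  intervalIntegral.intervalIntegral_pos_of_pos_on
    ((continuousOn_const.div_rpow (by fun_prop) (fun t ht => sub_pos.2 (hm t ht))
      q).intervalIntegrable)
    (fun t ht => one_div_pos.2 (rpow_pos_of_pos (sub_pos.2 (hm t
      (by rw [uIcc_of_le hab.le]; exact Ioo_subset_Icc_self ht))) q))
    hab

theorem sin_sq_lt_of_mem_uIcc {φ₀ φ₁ m t : ℝ} (h₀ : 0 ≤ φ₀) (h₀₁ : φ₀ ≤ φ₁) (h₁ : φ₁ ≤ π / 2)
    (hm : sin φ₁ ^ 2 < m) (ht : t ∈ uIcc φ₀ φ₁) : sin t ^ 2 < m := by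
  rw [uIcc_of_le h₀₁] at ht
  have hsin_nonneg : 0 ≤ sin t := sin_nonneg_of_nonneg_of_le_pi (h₀.trans ht.1)
    (by linarith [ht.2, pi_pos])
  have hsin_le : sin t ≤ sin φ₁ :=
    sin_le_sin_of_le_of_le_pi_div_two (by linarith [ht.1, pi_pos]) h₁ ht.2
  exact (pow_le_pow_left₀ hsin_nonneg hsin_le 2).trans_lt hm

theorem timeMapTClTilde_eq (φ₀ φ₁ : ℝ) : timeMapTClTilde φ₀ φ₁ = fun m =>
    √2 * ellipticMoment 0 (1 / 2) m + 1 / √2 * arcIntegral φ₀ φ₁ (1 / 2) m := by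
  funext m
  simp only [timeMapTClTilde, ellipticMoment, arcIntegral, pow_zero, sqrt_eq_rpow]

theorem hasDerivAt_timeMapTClTilde {φ₀ φ₁ m : ℝ} (hm : m < 1)
    (hφ : ∀ t ∈ uIcc φ₀ φ₁, sin t ^ 2 < m) :
    HasDerivAt (timeMapTClTilde φ₀ φ₁)
      (1 / √2 * ellipticMoment 2 (3 / 2) m - 1 / (2 * √2) * arcIntegral φ₀ φ₁ (3 / 2) m) m := by
  rw [timeMapTClTilde_eq]
  refine (((hasDerivAt_ellipticMoment 0 (q := 1 / 2) (by norm_num) hm).const_mul √2).add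
    ((hasDerivAt_arcIntegral (q := 1 / 2) (by norm_num) hφ).const_mul (1 / √2))).congr_deriv ?_
  have hsqrt : √2 * (1 / 2) = 1 / √2 := by rw [← sqrt_div_self']; ring
  norm_num
  linear_combination ellipticMoment 2 (3 / 2) m * hsqrt

theorem hasDerivAt_deriv_timeMapTClTilde {φ₀ φ₁ m : ℝ} (h₀ : 0 ≤ φ₀) (h₀₁ : φ₀ ≤ φ₁)
    (h₁ : φ₁ ≤ π / 2) (hm : m ∈ Ioo (sin φ₁ ^ 2) 1) :
    HasDerivAt (deriv (timeMapTClTilde φ₀ φ₁))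
      (3 / (2 * √2) * ellipticMoment 4 (5 / 2) m +
        3 / (4 * √2) * arcIntegral φ₀ φ₁ (5 / 2) m) m := by
  have hderiv : deriv (timeMapTClTilde φ₀ φ₁) =ᶠ[𝓝 m] fun x =>
      1 / √2 * ellipticMoment 2 (3 / 2) x - 1 / (2 * √2) * arcIntegral φ₀ φ₁ (3 / 2) x := by
    filter_upwards [isOpen_Ioo.mem_nhds hm] with x hx
    exact (hasDerivAt_timeMapTClTilde hx.2 fun t ht =>
      sin_sq_lt_of_mem_uIcc h₀ h₀₁ h₁ hx.1 ht).deriv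
  refine HasDerivAt.congr_of_eventuallyEq ?_ hderiv
  refine (((hasDerivAt_ellipticMoment 2 (q := 3 / 2) (by norm_num) hm.2).const_mul (1 / √2)).sub
    ((hasDerivAt_arcIntegral (q := 3 / 2) (by norm_num) fun t ht =>
      sin_sq_lt_of_mem_uIcc h₀ h₀₁ h₁ hm.1 ht).const_mul (1 / (2 * √2)))).congr_deriv ?_
  norm_num
  ring

/-- For `0 < φ₀ < φ₁ < π/2`, the map `T̃_{C_ℓ}` is strictly convex on
`(sin²φ₁, 1)`, with second derivative
`(3/(2√2)) ∫₀^{π/2} sin⁴θ/(1 − ã sin²θ)^{5/2} dθ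
 + (3/(4√2)) ∫_{φ₀}^{φ₁} dx/(ã − sin²x)^{5/2} > 0`. -/
theorem timeMapTClTilde_strictConvex (φ₀ φ₁ : ℝ) (h₀ : 0 < φ₀) (h₀₁ : φ₀ < φ₁)
    (h₁ : φ₁ < π / 2) :
    StrictConvexOn ℝ (Set.Ioo (Real.sin φ₁ ^ 2) 1) (timeMapTClTilde φ₀ φ₁) ∧
    ∀ a ∈ Set.Ioo (Real.sin φ₁ ^ 2) 1,
      deriv (deriv (timeMapTClTilde φ₀ φ₁)) a =
        (3 / (2 * Real.sqrt 2)) *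
          (∫ θ in (0:ℝ)..(π / 2),
            Real.sin θ ^ 4 / (1 - a * Real.sin θ ^ 2) ^ ((5:ℝ)/2)) +
        (3 / (4 * Real.sqrt 2)) *
          (∫ x in φ₀..φ₁, 1 / (a - Real.sin x ^ 2) ^ ((5:ℝ)/2)) ∧
      0 < (3 / (2 * Real.sqrt 2)) *
          (∫ θ in (0:ℝ)..(π / 2),
            Real.sin θ ^ 4 / (1 - a * Real.sin θ ^ 2) ^ ((5:ℝ)/2)) +
        (3 / (4 * Real.sqrt 2)) *
          (∫ x in φ₀..φ₁, 1 / (a - Real.sin x ^ 2) ^ ((5:ℝ)/2)) := by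
  have hφ : ∀ m ∈ Ioo (sin φ₁ ^ 2) 1, ∀ t ∈ uIcc φ₀ φ₁, sin t ^ 2 < m := fun m hm _ ht =>
    sin_sq_lt_of_mem_uIcc h₀.le h₀₁.le h₁.le hm.1 ht
  have hsecond : ∀ m ∈ Ioo (sin φ₁ ^ 2) 1, deriv (deriv (timeMapTClTilde φ₀ φ₁)) m =
      3 / (2 * √2) * ellipticMoment 4 (5 / 2) m + 3 / (4 * √2) * arcIntegral φ₀ φ₁ (5 / 2) m :=
    fun m hm => (hasDerivAt_deriv_timeMapTClTilde h₀.le h₀₁.le h₁.le hm).deriv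
  have hpos : ∀ m ∈ Ioo (sin φ₁ ^ 2) 1,
      0 < 3 / (2 * √2) * ellipticMoment 4 (5 / 2) m + 3 / (4 * √2) * arcIntegral φ₀ φ₁ (5 / 2) m :=
    fun m hm => add_pos (mul_pos (by positivity) (ellipticMoment_pos 4 _ hm.2))
      (mul_pos (by positivity) (arcIntegral_pos _ h₀₁ (hφ m hm)))
  refine ⟨strictConvexOn_of_deriv2_pos (convex_Ioo _ _) (fun m hm =>
    (hasDerivAt_timeMapTClTilde hm.2 (hφ m hm)).continuousAt.continuousWithinAt) fun m hm => ?_,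
    fun m hm => ⟨hsecond m hm, hpos m hm⟩⟩
  rw [interior_Ioo] at hm
  rw [Function.iterate_succ_apply, Function.iterate_one, hsecond m hm]
  exact hpos m hm
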